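/- arXiv:1405.7569 — 2 statements merged into one kernel-verified Lean document; each statement's English description precedes it below -/
import Mathlib

section
/- (Lemma 1 of the paper.) Let k : V × V → ℝ be a bilinear form, φ_1,…,φ_M adjoint states with a(v,φ_i) = −c_i(v) for all v, u the solution of a(u,v)=ℓ(v), s_i = c_i(u), d ∈ ℝ^M data, σ ≥ 0, and β ∈ ℝ^M the solution of Σ_j (k(φ_j,φ_i) + σ δ_{ij}) β_j = d_i − s_i. Define ū* ∈ V by a(ū*,v) = ℓ(v) − Σ_j β_j k(φ_j,v) for all v, and s̄*_i = c_i(ū*). Then s̄* = d − σβ. -/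
/-!
Testing the equation defining `ū*` against the adjoint state `φᵢ` gives
`s̄*ᵢ = sᵢ + ∑ⱼ βⱼ k(φⱼ, φᵢ)`, and the equation for `β` says that this sum is `dᵢ - sᵢ - σ βᵢ`.
-/

open Finset

theorem apply_eq_neg_of_adjoint {R V : Type*} [CommRing R] [AddCommGroup V] [Module R V]
    (a : V →ₗ[R] V →ₗ[R] R) (c : V →ₗ[R] R) (f : V → R) {φ w : V}
    (hφ : ∀ v, a v φ = -c v) (hw : ∀ v, a w v = f v) :
    c w = -f φ := by
  rw [← hw, hφ, neg_neg]

theorem sum_add_smul_ite_mul {R ι : Type*} [CommSemiring R] [Fintype ι] [DecidableEq ι]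
    (K : ι → ι → R) (σ : R) (β : ι → R) (i : ι) :
    ∑ j, (K j i + σ * (if i = j then 1 else 0)) * β j = ∑ j, K j i * β j + σ * β i := by
  simp only [add_mul, sum_add_distrib, mul_assoc, ← mul_sum, ite_mul, one_mul, zero_mul,
    sum_ite_eq, mem_univ, if_true]

theorem stmt_2_general {V : Type*} [AddCommGroup V] [Module ℝ V]
    (a : V →ₗ[ℝ] V →ₗ[ℝ] ℝ)
    (k : V →ₗ[ℝ] V →ₗ[ℝ] ℝ)
    (ℓ : V →ₗ[ℝ] ℝ) (M : ℕ) (c : Fin M → (V →ₗ[ℝ] ℝ))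
    (φ : Fin M → V) (hφ : ∀ (i : Fin M) (v : V), a v (φ i) = - c i v)
    (u : V) (hu : ∀ v : V, a u v = ℓ v)
    (s d : Fin M → ℝ) (hs : ∀ i, s i = c i u)
    (σ : ℝ)
    (β : Fin M → ℝ)
    (hβ : ∀ i : Fin M,
      ∑ j : Fin M, (k (φ j) (φ i) + σ * (if i = j then (1:ℝ) else 0)) * β j = d i - s i)
    (uBar : V)
    (huBar : ∀ v : V, a uBar v = ℓ v - ∑ j : Fin M, β j * k (φ j) v)
    (sBar : Fin M → ℝ) (hsBar : ∀ i, sBar i = c i uBar) :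
    ∀ i : Fin M, sBar i = d i - σ * β i := by
  intro i
  have hs_i : s i = -ℓ (φ i) := (hs i).trans (apply_eq_neg_of_adjoint a (c i) ℓ (hφ i) hu)
  have hsBar_i : sBar i = -(ℓ (φ i) - ∑ j, β j * k (φ j) (φ i)) :=
    (hsBar i).trans (apply_eq_neg_of_adjoint a (c i) _ (hφ i) huBar)
  have hkβ : ∑ j, β j * k (φ j) (φ i) = d i - s i - σ * β i := by
    have := hβ i
    rw [sum_add_smul_ite_mul (fun j i => k (φ j) (φ i))] at this
    simp only [mul_comm (β _)]
    linarith
  rw [hsBar_i, hkβ, hs_i]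
  ring

/-- Lemma 1 of the paper: the mean outputs satisfy `s̄* = d - σ β`. -/
theorem stmt_2 {V : Type*} [AddCommGroup V] [Module ℝ V] [FiniteDimensional ℝ V]
    (a : V →ₗ[ℝ] V →ₗ[ℝ] ℝ)
    (ha₁ : ∀ w : V, (∀ v : V, a w v = 0) → w = 0)
    (ha₂ : ∀ w : V, (∀ v : V, a v w = 0) → w = 0)
    (k : V →ₗ[ℝ] V →ₗ[ℝ] ℝ)
    (ℓ : V →ₗ[ℝ] ℝ) (M : ℕ) (c : Fin M → (V →ₗ[ℝ] ℝ))
    (φ : Fin M → V) (hφ : ∀ (i : Fin M) (v : V), a v (φ i) = - c i v)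
    (u : V) (hu : ∀ v : V, a u v = ℓ v)
    (s d : Fin M → ℝ) (hs : ∀ i, s i = c i u)
    (σ : ℝ) (hσ : 0 ≤ σ)
    (hD : IsUnit (Matrix.of fun i j : Fin M =>
      k (φ j) (φ i) + σ * (if i = j then (1:ℝ) else 0)))
    (β : Fin M → ℝ)
    (hβ : ∀ i : Fin M,
      ∑ j : Fin M, (k (φ j) (φ i) + σ * (if i = j then (1:ℝ) else 0)) * β j = d i - s i)
    (uBar : V)
    (huBar : ∀ v : V, a uBar v = ℓ v - ∑ j : Fin M, β j * k (φ j) v)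
    (sBar : Fin M → ℝ) (hsBar : ∀ i, sBar i = c i uBar) :
    ∀ i : Fin M, sBar i = d i - σ * β i :=
  stmt_2_general a k ℓ M c φ hφ u hu s d hs σ β hβ uBar huBar sBar hsBar
end

section
/- (Theorem 2, KKT characterization.) Let k be a symmetric bilinear form on V and σ > 0. If (q°,u°,β°,p°,ϱ°) satisfies the first-order stationarity conditions: k(q°,v) − k(p°,v) = 0 for all v; a(v,p°) + Σ_i ϱ°_i c_i(v) = 0 for all v; σβ°_i = σϱ°_i; a(u°,v) + k(q°,v) = ℓ(v) for all v; and c_i(u°) + σβ°_i = d_i, then β° satisfies Σ_j (k(φ_i,φ_j) + σδ_{ij})β°_j = d_i − s_i, q° = Σ_i β°_i φ_i (assuming k nondegenerate), and u° equals the posterior mean ū* defined by a(ū*,v) = ℓ(v) − Σ_j β_j k(φ_j,v). -/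
/-!
Eliminating the multipliers: `σ β° = σ ϱ°` gives `ϱ° = β°`, so the adjoint equation together with
`a(v, φᵢ) = -cᵢ(v)` and right-nondegeneracy of `a` forces `p° = ∑ β°ᵢ φᵢ`, and then `q° = p°` by
nondegeneracy of `k`. Subtracting the state equations of `u` and `u°` gives
`cᵢ(u°) - sᵢ = a(u - u°, φᵢ) = k(q°, φᵢ)`, which turns `cᵢ(u°) + σβ°ᵢ = dᵢ` into the linear system,
while the state equation of `u°` with `k(q°, ·) = ∑ β°ⱼ k(φⱼ, ·)` is the defining equation of `ū*`.
-/

open Finset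

namespace LinearMap

variable {R M N P : Type*} [CommRing R] [AddCommGroup M] [Module R M] [AddCommGroup N]
  [Module R N] [AddCommGroup P] [Module R P] {B : M →ₗ[R] N →ₗ[R] P}

theorem SeparatingLeft.eq_of_forall_apply_eq (hB : B.SeparatingLeft) {x x' : M}
    (h : ∀ y, B x y = B x' y) : x = x' :=
  sub_eq_zero.mp <| hB _ fun y => by rw [map_sub, sub_apply, h, sub_self]

theorem SeparatingRight.eq_of_forall_apply_eq (hB : B.SeparatingRight) {y y' : N}
    (h : ∀ x, B x y = B x y') : y = y' :=
  sub_eq_zero.mp <| hB _ fun x => by rw [map_sub, h, sub_self]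

end LinearMap

section AdjointStates

variable {R M N ι : Type*} [CommRing R] [AddCommGroup M] [Module R M] [AddCommGroup N]
  [Module R N] [Fintype ι]

theorem apply_sum_smul_adjoint (a : M →ₗ[R] N →ₗ[R] R) (c : ι → M →ₗ[R] R) (φ : ι → N)
    (hφ : ∀ i v, a v (φ i) = -c i v) (β : ι → R) (v : M) :
    a v (∑ i, β i • φ i) = -∑ i, β i * c i v := by
  simp only [map_sum, map_smul, smul_eq_mul, hφ, mul_neg, sum_neg_distrib]

theorem sum_smul_apply (k : N →ₗ[R] M →ₗ[R] R) (φ : ι → N) (β : ι → R) (v : M) :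
    k (∑ j, β j • φ j) v = ∑ j, β j * k (φ j) v := by
  simp only [map_sum, map_smul, LinearMap.sum_apply, LinearMap.smul_apply, smul_eq_mul]

end AdjointStates

theorem sum_add_mul_ite_mul {R ι : Type*} [CommSemiring R] [Fintype ι] [DecidableEq ι]
    (f β : ι → R) (σ : R) (i : ι) :
    ∑ j, (f j + σ * if i = j then 1 else 0) * β j = ∑ j, f j * β j + σ * β i := by
  simp only [add_mul, sum_add_distrib, mul_ite, mul_one, mul_zero, ite_mul, zero_mul,
    sum_ite_eq, mem_univ, if_true]

theorem stmt_4_general {V : Type*} [AddCommGroup V] [Module ℝ V]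
    (a : V →ₗ[ℝ] V →ₗ[ℝ] ℝ)
    (ha₁ : ∀ w : V, (∀ v : V, a w v = 0) → w = 0)
    (ha₂ : ∀ w : V, (∀ v : V, a v w = 0) → w = 0)
    (k : V →ₗ[ℝ] V →ₗ[ℝ] ℝ)
    (hksymm : ∀ v w : V, k v w = k w v)
    (hknd : ∀ w : V, (∀ v : V, k w v = 0) → w = 0)
    (ℓ : V →ₗ[ℝ] ℝ) (M : ℕ) (c : Fin M → (V →ₗ[ℝ] ℝ))
    (φ : Fin M → V) (hφ : ∀ (i : Fin M) (v : V), a v (φ i) = - c i v)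
    (u : V) (hu : ∀ v : V, a u v = ℓ v)
    (s d : Fin M → ℝ) (hs : ∀ i, s i = c i u)
    (σ : ℝ) (hσ : 0 < σ)
    (qo uo po : V) (βo ϱo : Fin M → ℝ)
    (h1 : ∀ v : V, k qo v - k po v = 0)
    (h2 : ∀ v : V, a v po + ∑ i : Fin M, ϱo i * c i v = 0)
    (h3 : ∀ i : Fin M, σ * βo i = σ * ϱo i)
    (h4 : ∀ v : V, a uo v + k qo v = ℓ v)
    (h5 : ∀ i : Fin M, c i uo + σ * βo i = d i)
    (uBar : V)
    (huBar : ∀ v : V, a uBar v = ℓ v - ∑ j : Fin M, βo j * k (φ j) v) :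
    (∀ i : Fin M,
      ∑ j : Fin M, (k (φ i) (φ j) + σ * (if i = j then (1:ℝ) else 0)) * βo j = d i - s i)
    ∧ qo = ∑ i : Fin M, βo i • φ i
    ∧ uo = uBar := by
  have hϱ : ϱo = βo := funext fun i => (mul_left_cancel₀ hσ.ne' (h3 i)).symm
  have hpo : po = ∑ i, βo i • φ i := LinearMap.SeparatingRight.eq_of_forall_apply_eq ha₂
    fun v => by rw [apply_sum_smul_adjoint a c φ hφ, ← hϱ]; linarith [h2 v]
  have hqo : qo = ∑ i, βo i • φ i :=
    hpo ▸ LinearMap.SeparatingLeft.eq_of_forall_apply_eq hknd fun v => sub_eq_zero.mp (h1 v)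
  have hkq : ∀ v, k qo v = ∑ j, βo j * k (φ j) v := fun v => hqo ▸ sum_smul_apply k φ βo v
  refine ⟨fun i => ?_, hqo, ?_⟩
  · have hmisfit : c i uo - s i = k qo (φ i) := by
      linarith [hs i, hφ i u, hφ i uo, hu (φ i), h4 (φ i)]
    rw [sum_add_mul_ite_mul, ← h5 i]
    calc ∑ j, k (φ i) (φ j) * βo j + σ * βo i = k qo (φ i) + σ * βo i := by
          simp only [hkq, hksymm (φ i), mul_comm (βo _)]
      _ = c i uo + σ * βo i - s i := by rw [← hmisfit]; ring
  · exact LinearMap.SeparatingLeft.eq_of_forall_apply_eq ha₁ fun v => by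
      rw [huBar, ← hkq]; linarith [h4 v]

/-- Theorem 2 (KKT characterization of the posterior mean state). -/
theorem stmt_4 {V : Type*} [AddCommGroup V] [Module ℝ V] [FiniteDimensional ℝ V]
    (a : V →ₗ[ℝ] V →ₗ[ℝ] ℝ)
    (ha₁ : ∀ w : V, (∀ v : V, a w v = 0) → w = 0)
    (ha₂ : ∀ w : V, (∀ v : V, a v w = 0) → w = 0)
    (k : V →ₗ[ℝ] V →ₗ[ℝ] ℝ)
    (hksymm : ∀ v w : V, k v w = k w v)
    (hknd : ∀ w : V, (∀ v : V, k w v = 0) → w = 0)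
    (ℓ : V →ₗ[ℝ] ℝ) (M : ℕ) (c : Fin M → (V →ₗ[ℝ] ℝ))
    (φ : Fin M → V) (hφ : ∀ (i : Fin M) (v : V), a v (φ i) = - c i v)
    (u : V) (hu : ∀ v : V, a u v = ℓ v)
    (s d : Fin M → ℝ) (hs : ∀ i, s i = c i u)
    (σ : ℝ) (hσ : 0 < σ)
    (hD : IsUnit (Matrix.of fun i j : Fin M =>
      k (φ i) (φ j) + σ * (if i = j then (1:ℝ) else 0)))
    (qo uo po : V) (βo ϱo : Fin M → ℝ)
    (h1 : ∀ v : V, k qo v - k po v = 0)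
    (h2 : ∀ v : V, a v po + ∑ i : Fin M, ϱo i * c i v = 0)
    (h3 : ∀ i : Fin M, σ * βo i = σ * ϱo i)
    (h4 : ∀ v : V, a uo v + k qo v = ℓ v)
    (h5 : ∀ i : Fin M, c i uo + σ * βo i = d i)
    (uBar : V)
    (huBar : ∀ v : V, a uBar v = ℓ v - ∑ j : Fin M, βo j * k (φ j) v) :
    (∀ i : Fin M,
      ∑ j : Fin M, (k (φ i) (φ j) + σ * (if i = j then (1:ℝ) else 0)) * βo j = d i - s i)
    ∧ qo = ∑ i : Fin M, βo i • φ i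
    ∧ uo = uBar :=
  stmt_4_general a ha₁ ha₂ k hksymm hknd ℓ M c φ hφ u hu s d hs σ hσ qo uo po βo ϱo h1 h2 h3 h4 h5
    uBar huBar
end
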